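/- In a weak bialgebra H, for every h ∈ H and l ∈ H^L one has h^{(1)} l^{(1)} ⊗ h^{(2)} l^{(2)} = h^{(1)} l ⊗ h^{(2)} and l^{(1)} h^{(1)} ⊗ l^{(2)} h^{(2)} = l h^{(1)} ⊗ h^{(2)}. -/

import Mathlib

/-! For `l = Π^L(x)`, slicing the first leg of `Δ²(1) = (1 ⊗ Δ(1))(Δ(1) ⊗ 1)` with `ε(· x)` and using
coassociativity gives `Δ(l) = Δ(1)(l ⊗ 1)`; the other form of `Δ²(1)` gives `Δ(l) = (l ⊗ 1)Δ(1)`.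
Since `Δ` is multiplicative, `Δ(h)Δ(1) = Δ(h) = Δ(1)Δ(h)`, so `Δ(h)Δ(l) = Δ(h)(l ⊗ 1)` and
`Δ(l)Δ(h) = (l ⊗ 1)Δ(h)`. -/

open TensorProduct

namespace WeakHopfPaper

variable (k H : Type*) [Field k] [Ring H] [Algebra k H] [Coalgebra k H]

/-- `Π^L h = ε(1⁽¹⁾ h) • 1⁽²⁾`, built as `(ε ⊗ id)(Δ(1) · (h ⊗ 1))`. -/
noncomputable def PiL : H →ₗ[k] H :=
  (TensorProduct.lid k H).toLinearMap
    ∘ₗ TensorProduct.map (Coalgebra.counit (R := k)) LinearMap.id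
    ∘ₗ LinearMap.mulLeft k (Coalgebra.comul (R := k) (1 : H))
    ∘ₗ (TensorProduct.mk k H H).flip 1

/-- `Π^R h = 1⁽¹⁾ • ε(h 1⁽²⁾)`, built as `(id ⊗ ε)((1 ⊗ h) · Δ(1))`. -/
noncomputable def PiR : H →ₗ[k] H :=
  (TensorProduct.rid k H).toLinearMap
    ∘ₗ TensorProduct.map LinearMap.id (Coalgebra.counit (R := k))
    ∘ₗ LinearMap.mulRight k (Coalgebra.comul (R := k) (1 : H))
    ∘ₗ TensorProduct.mk k H H 1

/-- `Π̄^L h = 1⁽¹⁾ • ε(1⁽²⁾ h)`, built as `(id ⊗ ε)(Δ(1) · (1 ⊗ h))`. -/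
noncomputable def PiLbar : H →ₗ[k] H :=
  (TensorProduct.rid k H).toLinearMap
    ∘ₗ TensorProduct.map LinearMap.id (Coalgebra.counit (R := k))
    ∘ₗ LinearMap.mulLeft k (Coalgebra.comul (R := k) (1 : H))
    ∘ₗ TensorProduct.mk k H H 1

/-- `Π̄^R h = ε(h 1⁽¹⁾) • 1⁽²⁾`, built as `(ε ⊗ id)((h ⊗ 1) · Δ(1))`. -/
noncomputable def PiRbar : H →ₗ[k] H :=
  (TensorProduct.lid k H).toLinearMap
    ∘ₗ TensorProduct.map (Coalgebra.counit (R := k)) LinearMap.id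
    ∘ₗ LinearMap.mulRight k (Coalgebra.comul (R := k) (1 : H))
    ∘ₗ (TensorProduct.mk k H H).flip 1

/-- A weak bialgebra: an algebra and coalgebra such that `Δ` is multiplicative,
`Δ²(1) = (Δ(1)⊗1)(1⊗Δ(1)) = (1⊗Δ(1))(Δ(1)⊗1)` and
`ε(hlm) = ε(h l⁽¹⁾)ε(l⁽²⁾ m) = ε(h l⁽²⁾)ε(l⁽¹⁾ m)`. -/
class WeakBialgebra : Prop where
  comul_mul : ∀ x y : H,
    Coalgebra.comul (R := k) (x * y) =
      Coalgebra.comul (R := k) x * Coalgebra.comul (R := k) y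
  comul_one_left :
    (TensorProduct.map (Coalgebra.comul (R := k)) LinearMap.id)
        (Coalgebra.comul (R := k) (1 : H)) =
      (Coalgebra.comul (R := k) (1 : H) ⊗ₜ[k] (1 : H)) *
        ((TensorProduct.assoc k H H H).symm
          ((1 : H) ⊗ₜ[k] Coalgebra.comul (R := k) (1 : H)))
  comul_one_right :
    (TensorProduct.map (Coalgebra.comul (R := k)) LinearMap.id)
        (Coalgebra.comul (R := k) (1 : H)) =
      ((TensorProduct.assoc k H H H).symm
          ((1 : H) ⊗ₜ[k] Coalgebra.comul (R := k) (1 : H))) *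
        (Coalgebra.comul (R := k) (1 : H) ⊗ₜ[k] (1 : H))
  counit_left : ∀ h l m : H,
    Coalgebra.counit (R := k) (h * l * m) =
      LinearMap.mul' k k
        ((TensorProduct.map
          (Coalgebra.counit (R := k) ∘ₗ LinearMap.mulLeft k h)
          (Coalgebra.counit (R := k) ∘ₗ LinearMap.mulRight k m))
          (Coalgebra.comul (R := k) l))
  counit_right : ∀ h l m : H,
    Coalgebra.counit (R := k) (h * l * m) =
      LinearMap.mul' k k
        ((TensorProduct.map
          (Coalgebra.counit (R := k) ∘ₗ LinearMap.mulLeft k h)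
          (Coalgebra.counit (R := k) ∘ₗ LinearMap.mulRight k m))
          ((TensorProduct.comm k H H) (Coalgebra.comul (R := k) l)))

section TensorSlice

variable {R A B M N : Type*} [CommSemiring R] [Semiring A] [Algebra R A] [Semiring B] [Algebra R B]
  [AddCommMonoid M] [Module R M] [AddCommMonoid N] [Module R N]

open LinearMap

theorem mul_tmul_one_eq_map_mulRight (z : A ⊗[R] B) (a : A) :
    z * (a ⊗ₜ[R] 1) = map (mulRight R a) id z := by
  rw [← mulRight_apply (R := R), mulRight_tmul, mulRight_one]

theorem tmul_one_mul_eq_map_mulLeft (z : A ⊗[R] B) (a : A) :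
    (a ⊗ₜ[R] 1) * z = map (mulLeft R a) id z := by
  rw [← mulLeft_apply (R := R), mulLeft_tmul, mulLeft_one]

theorem assoc_mul {C : Type*} [Semiring C] [Algebra R C] (x y : (A ⊗[R] B) ⊗[R] C) :
    TensorProduct.assoc R A B C (x * y) =
      TensorProduct.assoc R A B C x * TensorProduct.assoc R A B C y :=
  map_mul (Algebra.TensorProduct.assoc R R R A B C) x y

theorem lid_rTensor_lTensor (φ : A →ₗ[R] R) (f : M →ₗ[R] N) (w : A ⊗[R] M) :
    TensorProduct.lid R N (rTensor N φ (lTensor A f w)) =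
      f (TensorProduct.lid R M (rTensor M φ w)) := by
  induction w using TensorProduct.induction_on with
  | zero => simp
  | tmul a m => simp
  | add u v hu hv => simp only [map_add, hu, hv]

theorem lid_rTensor_one_tmul_mul (φ : A →ₗ[R] R) (b : B) (w : A ⊗[R] B) :
    TensorProduct.lid R B (rTensor B φ ((1 ⊗ₜ b) * w)) =
      b * TensorProduct.lid R B (rTensor B φ w) := by
  rw [← mulLeft_apply (R := R), mulLeft_tmul, mulLeft_one, ← lTensor_def, lid_rTensor_lTensor,
    mulLeft_apply]

theorem lid_rTensor_mul_one_tmul (φ : A →ₗ[R] R) (b : B) (w : A ⊗[R] B) :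
    TensorProduct.lid R B (rTensor B φ (w * (1 ⊗ₜ b))) =
      TensorProduct.lid R B (rTensor B φ w) * b := by
  rw [← mulRight_apply (R := R), mulRight_tmul, mulRight_one, ← lTensor_def,
    lid_rTensor_lTensor, mulRight_apply]

theorem lid_rTensor_assoc_tmul (φ : A →ₗ[R] R) (v : A ⊗[R] M) (n : N) :
    TensorProduct.lid R (M ⊗[R] N) (rTensor _ φ (TensorProduct.assoc R A M N (v ⊗ₜ n))) =
      TensorProduct.lid R M (rTensor M φ v) ⊗ₜ n := by
  induction v using TensorProduct.induction_on with
  | zero => simp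
  | tmul a m => simp [TensorProduct.smul_tmul']
  | add u v hu hv => simp only [TensorProduct.add_tmul, map_add, hu, hv]

end TensorSlice

section

variable {k H}

theorem PiL_apply (x : H) :
    PiL k H x = TensorProduct.lid k H (LinearMap.rTensor H
      (Coalgebra.counit ∘ₗ LinearMap.mulRight k x) (Coalgebra.comul (1 : H))) := by
  simp [PiL, mul_tmul_one_eq_map_mulRight, LinearMap.rTensor, TensorProduct.map_map]

variable [WeakBialgebra k H]

theorem lTensor_comul_comul_one_eq_one_tmul_mul :
    LinearMap.lTensor H Coalgebra.comul (Coalgebra.comul (R := k) (1 : H)) =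
      (1 ⊗ₜ Coalgebra.comul 1) * TensorProduct.assoc k H H H (Coalgebra.comul 1 ⊗ₜ 1) := by
  rw [← Coalgebra.coassoc_apply, LinearMap.rTensor, WeakBialgebra.comul_one_right, assoc_mul,
    LinearEquiv.apply_symm_apply]

theorem lTensor_comul_comul_one_eq_mul_one_tmul :
    LinearMap.lTensor H Coalgebra.comul (Coalgebra.comul (R := k) (1 : H)) =
      TensorProduct.assoc k H H H (Coalgebra.comul 1 ⊗ₜ 1) * (1 ⊗ₜ Coalgebra.comul 1) := by
  rw [← Coalgebra.coassoc_apply, LinearMap.rTensor, WeakBialgebra.comul_one_left, assoc_mul,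
    LinearEquiv.apply_symm_apply]

theorem comul_PiL_eq_comul_one_mul (x : H) :
    Coalgebra.comul (PiL k H x) = Coalgebra.comul (R := k) 1 * (PiL k H x ⊗ₜ 1) := by
  rw [PiL_apply, ← lid_rTensor_lTensor, lTensor_comul_comul_one_eq_one_tmul_mul,
    lid_rTensor_one_tmul_mul, lid_rTensor_assoc_tmul]

theorem comul_PiL_eq_mul_comul_one (x : H) :
    Coalgebra.comul (PiL k H x) = (PiL k H x ⊗ₜ 1) * Coalgebra.comul (R := k) 1 := by
  rw [PiL_apply, ← lid_rTensor_lTensor, lTensor_comul_comul_one_eq_mul_one_tmul,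
    lid_rTensor_mul_one_tmul, lid_rTensor_assoc_tmul]

end

/-- for `l ∈ H^L`:
`h⁽¹⁾l⁽¹⁾ ⊗ h⁽²⁾l⁽²⁾ = h⁽¹⁾l ⊗ h⁽²⁾` and `l⁽¹⁾h⁽¹⁾ ⊗ l⁽²⁾h⁽²⁾ = l h⁽¹⁾ ⊗ h⁽²⁾`. -/
theorem comul_mul_HL [WeakBialgebra k H] :
    ∀ (h : H), ∀ l ∈ LinearMap.range (PiL k H),
      (Coalgebra.comul (R := k) h * Coalgebra.comul (R := k) l =
        (TensorProduct.map (LinearMap.mulRight k l) LinearMap.id)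
          (Coalgebra.comul (R := k) h)) ∧
      (Coalgebra.comul (R := k) l * Coalgebra.comul (R := k) h =
        (TensorProduct.map (LinearMap.mulLeft k l) LinearMap.id)
          (Coalgebra.comul (R := k) h)) := by
  rintro h _ ⟨x, rfl⟩
  constructor
  · rw [comul_PiL_eq_comul_one_mul, ← mul_assoc, ← WeakBialgebra.comul_mul, mul_one,
      mul_tmul_one_eq_map_mulRight]
  · rw [comul_PiL_eq_mul_comul_one, mul_assoc, ← WeakBialgebra.comul_mul, one_mul,
      tmul_one_mul_eq_map_mulLeft]

end WeakHopfPaper
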